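/- arXiv:1903.08914 — 6 statements merged into one kernel-verified Lean document; each statement's English description precedes it below -/
import Mathlib

section
/- Let n > 1 be an integer, N = n+1, fix y ∈ ℝ^N, and set λ = (n−1)/2. Define the ladder operator L on functions ℝ^N∖{0} → ℝ by (Lf)(x) = K[z ↦ ⟨y, ∇(K[f])(z)⟩](x), i.e. L = K∘⟨y,∇_x⟩∘K. Then for every k ∈ ℕ and every x ∈ ℝ^N∖{0}, the k-fold iterate of L applied to the constant function 1 satisfies (L^k[1])(x) = (−1)^k · k! · C_k^λ(w) · (‖x‖‖y‖)^k. -/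
/-!
Kelvin inversion maps the zonal function `c · C_k^λ(w) · (‖x‖‖y‖)^k`, homogeneous of degree `k`,
to `c ‖y‖^k · C_k^λ(w) · ‖x‖^(2-N-k)`. The derivative along the axis `y` of `g(w) ‖x‖^a` is
`‖x‖^(a-1) ‖y‖ ((1 - w²) g'(w) + a w g(w))`, and for `a = 2 - N - k = -(2λ + k)` the three-term
identity `(k+1) C_{k+1}^λ(w) = (2λ + k) w C_k^λ(w) - (1 - w²) (C_k^λ)'(w)`, checked coefficient
by coefficient on the explicit sum, turns this into `-(k+1) C_{k+1}^λ(w)` times a power of `‖x‖`.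
Inverting back gives degree `k + 1`, and the formula follows by induction on `k`. Since `(L f)(x)`
for `x ≠ 0` depends only on `f` away from the origin, values at the origin never matter.
-/

open scoped RealInnerProductSpace

/-- The Kelvin inversion `K[f](x) = ‖x‖^(2-N) f(x/‖x‖²)` in `ℝ^N`. -/
noncomputable def kelvin {N : ℕ} (f : EuclideanSpace ℝ (Fin N) → ℝ)
    (x : EuclideanSpace ℝ (Fin N)) : ℝ :=
  ‖x‖ ^ ((2 : ℝ) - N) * f ((‖x‖ ^ 2)⁻¹ • x)

/-- The Gegenbauer polynomial `C_k^λ(z)` given by its explicit sum. -/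
noncomputable def gegenbauer (k : ℕ) (l : ℝ) (z : ℝ) : ℝ :=
  ∑ j ∈ Finset.range (k / 2 + 1),
    (-1 : ℝ) ^ j * (Real.Gamma ((k : ℝ) - j + l) /
      (Real.Gamma l * (Nat.factorial j) * (Nat.factorial (k - 2 * j)))) * (2 * z) ^ (k - 2 * j)

/-- The ladder operator `L = K ∘ ⟨y, ∇_x⟩ ∘ K`. -/
noncomputable def ladder {N : ℕ} (y : EuclideanSpace ℝ (Fin N))
    (f : EuclideanSpace ℝ (Fin N) → ℝ) : EuclideanSpace ℝ (Fin N) → ℝ :=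
  kelvin (fun z => fderiv ℝ (kelvin f) z y)

open Finset
open scoped Nat

-- Extended by zero beyond `j = k / 2`, so that `gegenbauer` is a sum over any long enough range.
noncomputable def gegenbauerCoeff (l : ℝ) (k j : ℕ) : ℝ :=
  if 2 * j ≤ k then
    (-1 : ℝ) ^ j * (Real.Gamma ((k : ℝ) - j + l) / (Real.Gamma l * j ! * (k - 2 * j)!))
  else 0

section Gegenbauer

variable {l : ℝ}

lemma gegenbauerCoeff_of_lt {k j : ℕ} (h : k < 2 * j) : gegenbauerCoeff l k j = 0 :=
  if_neg (by omega)

lemma gegenbauer_eq_sum_range {k M : ℕ} (hM : k / 2 < M) (z : ℝ) :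
    gegenbauer k l z = ∑ j ∈ range M, gegenbauerCoeff l k j * (2 * z) ^ (k - 2 * j) := by
  rw [gegenbauer, ← Finset.sum_subset (range_subset_range.mpr (show k / 2 + 1 ≤ M by omega))]
  · refine Finset.sum_congr rfl fun j hj => ?_
    rw [gegenbauerCoeff, if_pos (by simp at hj; omega)]
  · intro j _ hj
    rw [gegenbauerCoeff_of_lt (by simp at hj; omega), zero_mul]

lemma gegenbauer_zero (hl : 0 < l) (z : ℝ) : gegenbauer 0 l z = 1 := by
  simp [gegenbauer, (Real.Gamma_pos_of_pos hl).ne']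

lemma hasDerivAt_gegenbauer (k : ℕ) (l z : ℝ) :
    HasDerivAt (gegenbauer k l)
      (∑ j ∈ range (k + 1),
        gegenbauerCoeff l k j * (2 * (k - 2 * j : ℕ) * (2 * z) ^ (k - 2 * j - 1))) z := by
  rw [show gegenbauer k l = _ from funext (gegenbauer_eq_sum_range (M := k + 1) (by omega))]
  refine HasDerivAt.fun_sum fun j _ => HasDerivAt.const_mul _ ?_
  convert ((hasDerivAt_id' z).const_mul (2 : ℝ)).fun_pow (k - 2 * j) using 1
  ring

lemma add_mul_gegenbauerCoeff_zero (hl : 0 < l) (k : ℕ) :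
    (l + k) * gegenbauerCoeff l k 0 = (k + 1) * gegenbauerCoeff l (k + 1) 0 := by
  simp only [gegenbauerCoeff, mul_zero, zero_le, if_true, Nat.sub_zero, CharP.cast_eq_zero,
    sub_zero]
  rw [Nat.factorial_succ, show ((k + 1 : ℕ) : ℝ) + l = (k + l) + 1 by push_cast; ring,
    Real.Gamma_add_one (by positivity)]
  have := (Real.Gamma_pos_of_pos hl).ne'
  push_cast
  field_simp
  ring

lemma gegenbauerCoeff_succ_succ (hl : 0 < l) (k j : ℕ) :
    (l + k - (j + 1)) * gegenbauerCoeff l k (j + 1)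
        - 2 * ((k - 2 * j : ℕ) : ℝ) * gegenbauerCoeff l k j
      = (k + 1) * gegenbauerCoeff l (k + 1) (j + 1) := by
  have hΓ := (Real.Gamma_pos_of_pos hl).ne'
  obtain ⟨d, rfl⟩ | rfl | hk : (∃ d, k = 2 * j + 2 + d) ∨ k = 2 * j + 1 ∨ k ≤ 2 * j := by
    rcases le_or_gt k (2 * j + 1) with h | h
    · omega
    · exact Or.inl ⟨k - (2 * j + 2), by omega⟩
  · simp only [gegenbauerCoeff, if_pos (show 2 * (j + 1) ≤ 2 * j + 2 + d by omega),
      if_pos (show 2 * j ≤ 2 * j + 2 + d by omega),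
      if_pos (show 2 * (j + 1) ≤ 2 * j + 2 + d + 1 by omega)]
    rw [show 2 * j + 2 + d - 2 * (j + 1) = d by omega, show 2 * j + 2 + d - 2 * j = d + 2 by omega,
      show 2 * j + 2 + d + 1 - 2 * (j + 1) = d + 1 by omega]
    obtain ⟨X, hX⟩ : ∃ X : ℝ, X = j + d + l + 1 := ⟨_, rfl⟩
    rw [show ((2 * j + 2 + d : ℕ) : ℝ) - ((j + 1 : ℕ) : ℝ) + l = X by push_cast; linarith,
      show ((2 * j + 2 + d : ℕ) : ℝ) - j + l = X + 1 by push_cast; linarith,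
      show ((2 * j + 2 + d + 1 : ℕ) : ℝ) - ((j + 1 : ℕ) : ℝ) + l = X + 1 by push_cast; linarith,
      Real.Gamma_add_one (s := X) (by rw [hX]; positivity), Nat.factorial_succ j,
      Nat.factorial_succ (d + 1), Nat.factorial_succ d]
    push_cast
    field_simp
    subst hX
    ring
  · rw [gegenbauerCoeff_of_lt (by omega), show 2 * j + 1 - 2 * j = 1 by omega]
    simp only [gegenbauerCoeff, if_true, show 2 * j ≤ 2 * j + 1 by omega,
      show 2 * (j + 1) ≤ 2 * j + 1 + 1 by omega,
      show 2 * j + 1 + 1 - 2 * (j + 1) = 0 by omega, show 2 * j + 1 - 2 * j = 1 by omega]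
    rw [show ((2 * j + 1 + 1 : ℕ) : ℝ) - ((j + 1 : ℕ) : ℝ) + l = ((2 * j + 1 : ℕ) : ℝ) - j + l by
      push_cast; ring, Nat.factorial_succ j]
    push_cast
    field_simp
    ring
  · rw [gegenbauerCoeff_of_lt (j := j + 1) (by omega),
      gegenbauerCoeff_of_lt (k := k + 1) (by omega), show k - 2 * j = 0 by omega]
    simp

theorem gegenbauer_succ (hl : 0 < l) (k : ℕ) (z : ℝ) :
    (k + 1) * gegenbauer (k + 1) l z
      = (2 * l + k) * z * gegenbauer k l z - (1 - z ^ 2) * deriv (gegenbauer k l) z := by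
  set A : ℕ → ℝ := fun j => (l + k - j) * gegenbauerCoeff l k j * (2 * z) ^ (k + 1 - 2 * j)
  set B : ℕ → ℝ := fun j =>
    2 * ((k - 2 * j : ℕ) : ℝ) * gegenbauerCoeff l k j * (2 * z) ^ (k - 2 * j - 1)
  -- The `j`-th summand of the right-hand side is `A j - B j`, and `A (j + 1) - B j` is the
  -- `(j + 1)`-th summand of the left-hand side.
  have hterm : ∀ j, (2 * l + k) * z * (gegenbauerCoeff l k j * (2 * z) ^ (k - 2 * j))
      - (1 - z ^ 2) * (gegenbauerCoeff l k j * (2 * (k - 2 * j : ℕ) * (2 * z) ^ (k - 2 * j - 1)))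
      = A j - B j := by
    intro j
    rcases lt_or_ge k (2 * j) with h | h
    · simp [A, B, gegenbauerCoeff_of_lt h]
    obtain ⟨m, rfl⟩ := exists_add_of_le h
    simp only [A, B, show 2 * j + m - 2 * j = m by omega,
      show 2 * j + m + 1 - 2 * j = m + 1 by omega]
    cases m with
    | zero => push_cast; ring
    | succ m => rw [show m + 1 - 1 = m by omega]; push_cast; ring
  have hstep : ∀ j, A (j + 1) - B j
      = (k + 1) * (gegenbauerCoeff l (k + 1) (j + 1) * (2 * z) ^ (k + 1 - 2 * (j + 1))) := by
    intro j
    simp only [A, B]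
    rw [show k - 2 * j - 1 = k + 1 - 2 * (j + 1) by omega]
    push_cast
    linear_combination (2 * z) ^ (k + 1 - 2 * (j + 1)) * gegenbauerCoeff_succ_succ hl k j
  have hA : ∑ j ∈ range (k + 1), A (j + 1) + A 0 = ∑ j ∈ range (k + 1), A j := by
    have hlast : A (k + 1) = 0 := by
      simp only [A, gegenbauerCoeff_of_lt (show k < 2 * (k + 1) by omega), mul_zero, zero_mul]
    rw [← sum_range_succ', sum_range_succ, hlast, add_zero]
  rw [(hasDerivAt_gegenbauer k l z).deriv, gegenbauer_eq_sum_range (k := k) (M := k + 1) (by omega),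
    gegenbauer_eq_sum_range (k := k + 1) (M := k + 2) (by omega), mul_sum, mul_sum, mul_sum,
    ← sum_sub_distrib, sum_congr rfl fun j _ => hterm j, sum_range_succ',
    ← sum_congr rfl fun j _ => hstep j]
  have hA0 : A 0 = (k + 1) * (gegenbauerCoeff l (k + 1) 0 * (2 * z) ^ (k + 1 - 2 * 0)) := by
    simp only [A, Nat.mul_zero, Nat.sub_zero, Nat.cast_zero, sub_zero]
    linear_combination (2 * z) ^ (k + 1) * add_mul_gegenbauerCoeff_zero hl k
  rw [← hA0, sum_sub_distrib, sum_sub_distrib, ← hA]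
  ring

end Gegenbauer

section Zonal

variable {E : Type*} [NormedAddCommGroup E] [InnerProductSpace ℝ E]

theorem hasFDerivAt_norm_of_ne_zero {z : E} (hz : z ≠ 0) :
    HasFDerivAt (‖·‖) (‖z‖⁻¹ • innerSL ℝ z) z := by
  have h := (hasStrictFDerivAt_norm_sq z).hasFDerivAt.sqrt (by positivity)
  simp only [Real.sqrt_sq (norm_nonneg _)] at h
  convert h using 1
  ext v
  have := norm_ne_zero_iff.mpr hz
  simp only [smul_apply, coe_innerSL_apply, smul_eq_mul, one_div, mul_inv_rev, nsmul_eq_mul,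
    Nat.cast_ofNat]
  field_simp

theorem fderiv_comp_cos_mul_norm_rpow_apply {g : ℝ → ℝ} (a : ℝ) (y : E) {z : E} (hz : z ≠ 0)
    (hg : DifferentiableAt ℝ g (⟪z, y⟫ / (‖z‖ * ‖y‖))) :
    fderiv ℝ (fun x => g (⟪x, y⟫ / (‖x‖ * ‖y‖)) * ‖x‖ ^ a) z y
      = ‖z‖ ^ (a - 1) * ‖y‖ *
          ((1 - (⟪z, y⟫ / (‖z‖ * ‖y‖)) ^ 2) * deriv g (⟪z, y⟫ / (‖z‖ * ‖y‖))
            + a * (⟪z, y⟫ / (‖z‖ * ‖y‖)) * g (⟪z, y⟫ / (‖z‖ * ‖y‖))) := by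
  rcases eq_or_ne y 0 with rfl | hy
  · simp
  have hz' := norm_ne_zero_iff.mpr hz
  have hy' := norm_ne_zero_iff.mpr hy
  have hnorm := hasFDerivAt_norm_of_ne_zero hz
  have hinner : HasFDerivAt (fun x : E => ⟪x, y⟫) (innerSL ℝ y) z :=
    (innerSL ℝ y).hasFDerivAt.congr_of_eventuallyEq (.of_eq (funext fun x => real_inner_comm y x))
  have hcos := hinner.mul
    ((hasDerivAt_inv (mul_ne_zero hz' hy')).comp_hasFDerivAt z (hnorm.mul_const ‖y‖))
  have hpow := (Real.hasDerivAt_rpow_const (p := a) (Or.inl hz')).comp_hasFDerivAt z hnorm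
  simp only [div_eq_mul_inv] at hg ⊢
  have hF : HasFDerivAt (fun x => g (⟪x, y⟫ * (‖x‖ * ‖y‖)⁻¹) * ‖x‖ ^ a) _ z :=
    (hg.hasDerivAt.comp_hasFDerivAt z hcos).mul hpow
  rw [hF.fderiv]
  simp only [add_apply, smul_apply, innerSL_apply_apply, smul_eq_mul, Function.comp_apply,
    Pi.mul_apply, real_inner_self_eq_norm_sq]
  rw [Real.rpow_sub_one hz']
  field_simp
  ring

theorem norm_inv_norm_sq_smul (x : E) : ‖(‖x‖ ^ 2)⁻¹ • x‖ = ‖x‖⁻¹ := by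
  rcases eq_or_ne x 0 with rfl | hx
  · simp
  have := norm_ne_zero_iff.mpr hx
  rw [norm_smul, norm_inv, norm_pow, norm_norm]
  field_simp

theorem real_inner_div_norm_mul_norm_inv_norm_sq_smul (x y : E) :
    ⟪(‖x‖ ^ 2)⁻¹ • x, y⟫ / (‖(‖x‖ ^ 2)⁻¹ • x‖ * ‖y‖) = ⟪x, y⟫ / (‖x‖ * ‖y‖) := by
  rcases eq_or_ne x 0 with rfl | hx
  · simp
  simp only [← InnerProductGeometry.cos_angle]
  rw [InnerProductGeometry.angle_smul_left_of_pos _ _ (by positivity)]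

theorem inv_norm_sq_smul_ne_zero {x : E} (hx : x ≠ 0) : (‖x‖ ^ 2)⁻¹ • x ≠ 0 :=
  smul_ne_zero (by simpa using hx) hx

noncomputable def gegenbauerZonal (l : ℝ) (y : E) (k : ℕ) (x : E) : ℝ :=
  (-1) ^ k * k ! * gegenbauer k l (⟪x, y⟫ / (‖x‖ * ‖y‖)) * (‖x‖ * ‖y‖) ^ k

end Zonal

section Ladder

variable {N : ℕ} {l : ℝ}

theorem ladder_apply_congr (y : EuclideanSpace ℝ (Fin N)) {f g : EuclideanSpace ℝ (Fin N) → ℝ}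
    (h : ∀ z, z ≠ 0 → f z = g z) {x : EuclideanSpace ℝ (Fin N)} (hx : x ≠ 0) :
    ladder y f x = ladder y g x := by
  have hkelvin : kelvin f =ᶠ[nhds ((‖x‖ ^ 2)⁻¹ • x)] kelvin g := by
    filter_upwards [isOpen_ne.mem_nhds (inv_norm_sq_smul_ne_zero hx)] with z hz
    rw [kelvin, kelvin, h _ (inv_norm_sq_smul_ne_zero hz)]
  rw [ladder, ladder, kelvin, kelvin, hkelvin.fderiv_eq]

theorem kelvin_gegenbauerZonal (y : EuclideanSpace ℝ (Fin N)) (k : ℕ)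
    {z : EuclideanSpace ℝ (Fin N)} (hz : z ≠ 0) :
    kelvin (gegenbauerZonal l y k) z
      = (-1) ^ k * k ! * ‖y‖ ^ k * gegenbauer k l (⟪z, y⟫ / (‖z‖ * ‖y‖))
          * ‖z‖ ^ ((2 : ℝ) - N - k) := by
  have hsplit : ‖z‖ ^ ((2 : ℝ) - N - k) = ‖z‖ ^ ((2 : ℝ) - N) * ‖z‖⁻¹ ^ k := by
    rw [Real.rpow_sub (norm_pos_iff.mpr hz), Real.rpow_natCast, div_eq_mul_inv, inv_pow]
  rw [kelvin, gegenbauerZonal, real_inner_div_norm_mul_norm_inv_norm_sq_smul,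
    norm_inv_norm_sq_smul, hsplit]
  ring

theorem ladder_gegenbauerZonal (hl : 0 < l) (hN : (N : ℝ) = 2 * l + 2)
    (y : EuclideanSpace ℝ (Fin N)) (k : ℕ) {x : EuclideanSpace ℝ (Fin N)} (hx : x ≠ 0) :
    ladder y (gegenbauerZonal l y k) x = gegenbauerZonal l y (k + 1) x := by
  have hx' := inv_norm_sq_smul_ne_zero hx
  have hkelvin : kelvin (gegenbauerZonal l y k) =ᶠ[nhds ((‖x‖ ^ 2)⁻¹ • x)]
      fun z => (fun t => (-1) ^ k * k ! * ‖y‖ ^ k * gegenbauer k l t) (⟪z, y⟫ / (‖z‖ * ‖y‖))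
        * ‖z‖ ^ ((2 : ℝ) - N - k) := by
    filter_upwards [isOpen_ne.mem_nhds hx'] with z hz
    exact kelvin_gegenbauerZonal y k hz
  rw [ladder, kelvin, hkelvin.fderiv_eq, fderiv_comp_cos_mul_norm_rpow_apply _ _ hx'
    (((hasDerivAt_gegenbauer k l _).differentiableAt).const_mul _), deriv_const_mul _
    (hasDerivAt_gegenbauer k l _).differentiableAt, real_inner_div_norm_mul_norm_inv_norm_sq_smul,
    norm_inv_norm_sq_smul, gegenbauerZonal]
  have hpow : ‖x‖ ^ ((2 : ℝ) - N) * ‖x‖⁻¹ ^ ((2 : ℝ) - N - k - 1) = ‖x‖ ^ (k + 1) := by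
    rw [Real.inv_rpow (norm_nonneg _), ← Real.rpow_neg (norm_nonneg _),
      ← Real.rpow_add (norm_pos_iff.mpr hx), ← Real.rpow_natCast]
    push_cast
    ring_nf
  set w := ⟪x, y⟫ / (‖x‖ * ‖y‖)
  set c : ℝ := (-1) ^ k * k ! * ‖y‖ ^ k
  rw [hN] at hpow
  rw [hN, Nat.factorial_succ]
  push_cast
  linear_combination ‖y‖ * ((1 - w ^ 2) * (c * deriv (gegenbauer k l) w)
    - (2 * l + k) * w * (c * gegenbauer k l w)) * hpow
    + ‖x‖ ^ (k + 1) * ‖y‖ * c * gegenbauer_succ hl k w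

theorem ladder_iterate_one_apply (hl : 0 < l) (hN : (N : ℝ) = 2 * l + 2)
    (y : EuclideanSpace ℝ (Fin N)) (k : ℕ) {x : EuclideanSpace ℝ (Fin N)} (hx : x ≠ 0) :
    (ladder y)^[k] (fun _ => 1) x = gegenbauerZonal l y k x := by
  induction k generalizing x with
  | zero => simp [gegenbauerZonal, gegenbauer_zero hl]
  | succ k ih =>
    rw [Function.iterate_succ_apply', ladder_apply_congr y (fun z hz => ih hz) hx,
      ladder_gegenbauerZonal hl hN y k hx]

end Ladder

/-- `(L^k[1])(x) = (-1)^k k! C_k^λ(w) (‖x‖‖y‖)^k` with `λ = (n-1)/2`. -/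
theorem stmt1 (n : ℕ) (hn : 1 < n) (y : EuclideanSpace ℝ (Fin (n + 1))) (k : ℕ)
    (x : EuclideanSpace ℝ (Fin (n + 1))) (hx : x ≠ 0) :
    (ladder y)^[k] (fun _ => (1 : ℝ)) x =
      (-1 : ℝ) ^ k * (Nat.factorial k) *
        gegenbauer k (((n : ℝ) - 1) / 2) (⟪x, y⟫ / (‖x‖ * ‖y‖)) * (‖x‖ * ‖y‖) ^ k := by
  have hn' : (1 : ℝ) < n := by exact_mod_cast hn
  exact ladder_iterate_one_apply (by linarith) (by push_cast; ring) y k hx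
end

section
/- Let x, y be nonzero real quaternions and k ∈ ℕ. Then the real part of the k-th power of x·(star y) satisfies Re((x·star y)^k) = (U_k(w) − w·U_{k−1}(w)) · (‖x‖‖y‖)^k, where U_j denotes the Chebyshev polynomial of the second kind (which equals the Gegenbauer polynomial C^1_j), with the convention U_{−1} = 0. -/
/-!
Writing `r = ‖q‖` and `c = Re q`, every quaternion satisfies `q² = 2c·q - r²`, so the real parts
of the powers of `q` obey the Chebyshev recurrence `a (n+2) = 2c·a (n+1) - r²·a n`; hence
`Re (qⁿ) = rⁿ Tₙ(c/r)`, and `Tₙ = Uₙ - X·Uₙ₋₁`. Apply this to `q = x·star y`, whose norm is `‖x‖‖y‖`.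
-/

open scoped Quaternion
open Polynomial Polynomial.Chebyshev

namespace Quaternion

variable {R : Type*} [CommRing R]

theorem mul_self_eq_smul_sub_normSq (q : ℍ[R]) :
    q * q = (2 * q.re) • q - ((normSq q : R) : ℍ[R]) := by
  have h : q = ((2 * q.re : R) : ℍ[R]) - star q := by
    rw [eq_sub_iff_add_eq, self_add_star']
  calc q * q = q * (((2 * q.re : R) : ℍ[R]) - star q) := by rw [← h]
    _ = (2 * q.re) • q - ((normSq q : R) : ℍ[R]) := by rw [mul_sub, self_mul_star, mul_coe_eq_smul]

theorem re_pow_add_two (q : ℍ[R]) (n : ℕ) :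
    (q ^ (n + 2)).re = 2 * q.re * (q ^ (n + 1)).re - normSq q * (q ^ n).re := by
  rw [pow_add, pow_two, mul_self_eq_smul_sub_normSq, mul_sub, mul_smul_comm, mul_coe_eq_smul,
    re_sub, re_smul, re_smul, pow_succ, smul_eq_mul, smul_eq_mul, mul_comm (normSq q)]

theorem re_pow_eq_eval_chebyshevT (q : ℍ[ℝ]) (n : ℕ) :
    (q ^ n).re = (T ℝ n).eval (q.re / ‖q‖) * ‖q‖ ^ n := by
  rcases eq_or_ne q 0 with rfl | hq
  -- `q.re / ‖q‖` is the junk value `0` here, but it is multiplied by `‖q‖ ^ n = 0` unless `n = 0`.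
  · rcases n with _ | n <;> simp
  have hr : ‖q‖ ≠ 0 := norm_ne_zero_iff.mpr hq
  induction n using Nat.twoStepInduction with
  | zero => simp
  | one => simp [div_mul_cancel₀ _ hr]
  | more n ih₀ ih₁ =>
    rw [re_pow_add_two, ih₀, ih₁, normSq_eq_norm_mul_self]
    push_cast
    rw [T_add_two]
    simp only [eval_sub, eval_mul, eval_ofNat, eval_X]
    field_simp
    ring

end Quaternion

theorem stmt10_general (x y : ℍ[ℝ]) (k : ℕ) :
    ((x * star y) ^ k).re =
      ((Polynomial.Chebyshev.U ℝ (k : ℤ)).eval ((x * star y).re / (‖x‖ * ‖y‖)) -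
          ((x * star y).re / (‖x‖ * ‖y‖)) *
            (Polynomial.Chebyshev.U ℝ ((k : ℤ) - 1)).eval ((x * star y).re / (‖x‖ * ‖y‖))) *
        (‖x‖ * ‖y‖) ^ k := by
  rw [Quaternion.re_pow_eq_eval_chebyshevT, T_eq_U_sub_X_mul_U, norm_mul, norm_star]
  simp only [eval_sub, eval_mul, eval_X]

/-- for nonzero quaternions `x, y`,
`Re((x·star y)^k) = (U_k(w) - w·U_{k-1}(w))·(‖x‖‖y‖)^k`, where
`w = Re(x·star y)/(‖x‖‖y‖)` and `U` is the Chebyshev polynomial of the second kind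
(with `U_{-1} = 0`). -/
theorem stmt10 (x y : ℍ[ℝ]) (hx : x ≠ 0) (hy : y ≠ 0) (k : ℕ) :
    ((x * star y) ^ k).re =
      ((Polynomial.Chebyshev.U ℝ (k : ℤ)).eval ((x * star y).re / (‖x‖ * ‖y‖)) -
          ((x * star y).re / (‖x‖ * ‖y‖)) *
            (Polynomial.Chebyshev.U ℝ ((k : ℤ) - 1)).eval ((x * star y).re / (‖x‖ * ‖y‖))) *
        (‖x‖ * ‖y‖) ^ k :=
  stmt10_general x y k
end

section
/- Let x, y be nonzero real quaternions such that x·(star y) ≠ y·(star x), and let k ∈ ℕ. Then (x·star y − y·star x)⁻¹ · ((x·star y)^{k+1} − (y·star x)^{k+1}) = U_k(w)·(‖x‖‖y‖)^k, where the right-hand side is a real scalar (viewed as a quaternion) and U_k is the Chebyshev polynomial of the second kind (equal to the Gegenbauer polynomial C^1_k). In particular this quaternion equals (1/(k+1))·Z^1_k(x,y), the zonal harmonic of degree k in ℝ⁴. -/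
/-!
For `q = x * star y`, the quaternions `q` and `star q` commute, with `q + star q = 2 Re q` and
`q * star q = ‖q‖²`. Their rescalings `a = q / ‖q‖`, `b = star q / ‖q‖` have product `1`, so, like
`e^{±iθ}` with `cos θ = w`, the quotients `(a^(k+1) - b^(k+1)) / (a - b)` satisfy the three-term
recursion `U_(k+2) = 2X U_(k+1) - U_k` of the Chebyshev polynomials.
-/

open scoped Quaternion

open Polynomial

theorem Commute.pow_add_two_sub_pow_add_two {A : Type*} [Ring A] {a b : A} (hab : Commute a b)
    (n : ℕ) :
    a ^ (n + 2) - b ^ (n + 2) = (a + b) * (a ^ (n + 1) - b ^ (n + 1)) - a * b * (a ^ n - b ^ n) := by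
  rw [hab.eq]
  simp only [mul_sub, add_mul, mul_assoc, ← pow_succ']
  rw [← mul_assoc b a, ← hab.eq, mul_assoc, ← pow_succ']
  abel

theorem Commute.pow_succ_sub_pow_succ_eq_mul_chebyshevU {R A : Type*} [CommRing R] [Ring A]
    [Algebra R A] {a b : A} (hab : Commute a b) {c : R} (hsum : a + b = algebraMap R A (2 * c))
    (hprod : a * b = 1) (k : ℕ) :
    a ^ (k + 1) - b ^ (k + 1) = (a - b) * algebraMap R A ((Chebyshev.U R k).eval c) := by
  induction k using Nat.twoStepInduction with
  | zero => simp
  | one =>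
    rw [Nat.cast_one, Chebyshev.U_one, eval_mul, eval_X, eval_ofNat, ← hsum, sq, sq, sub_mul,
      mul_add, mul_add, hab.eq]
    abel
  | more n ih₀ ih₁ =>
    have hcast : ((n + 2 : ℕ) : ℤ) = (n + 1 : ℕ) + 1 := by push_cast; ring
    rw [hab.pow_add_two_sub_pow_add_two, ih₀, ih₁, hsum, hprod, one_mul,
      (Algebra.commute_algebraMap_left _ _).left_comm, ← mul_sub, ← map_mul, ← map_sub, hcast,
      Chebyshev.U_add_one]
    simp [mul_assoc]

theorem Commute.pow_succ_sub_pow_succ_eq_mul_chebyshevU_of_mul_eq_sq {K A : Type*} [Field K]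
    [Ring A] [Algebra K A] {a b : A} (hab : Commute a b) {t n : K} (hn : n ≠ 0)
    (hsum : a + b = algebraMap K A (2 * t)) (hprod : a * b = algebraMap K A (n ^ 2)) (k : ℕ) :
    a ^ (k + 1) - b ^ (k + 1) =
      (a - b) * algebraMap K A ((Chebyshev.U K k).eval (t / n) * n ^ k) := by
  have hsum' : n⁻¹ • a + n⁻¹ • b = algebraMap K A (2 * (t / n)) := by
    rw [← smul_add, hsum, Algebra.algebraMap_eq_smul_one, Algebra.algebraMap_eq_smul_one,
      smul_smul]
    ring_nf
  have hprod' : n⁻¹ • a * n⁻¹ • b = 1 := by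
    rw [smul_mul_smul, hprod, Algebra.algebraMap_eq_smul_one, smul_smul]
    field_simp
    exact one_smul K 1
  have key := ((hab.smul_left n⁻¹).smul_right n⁻¹).pow_succ_sub_pow_succ_eq_mul_chebyshevU
    hsum' hprod' k
  rw [_root_.smul_pow, _root_.smul_pow, ← smul_sub, ← smul_sub, smul_mul_assoc] at key
  have := congrArg (n ^ (k + 1) • ·) key
  simp only [smul_smul] at this
  rw [show n ^ (k + 1) * n⁻¹ ^ (k + 1) = 1 by rw [inv_pow, mul_inv_cancel₀ (pow_ne_zero _ hn)],
    show n ^ (k + 1) * n⁻¹ = n ^ k by field_simp; ring, one_smul] at this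
  rw [this, Algebra.smul_def, Algebra.commutes, mul_assoc, ← map_mul]

theorem Quaternion.inv_sub_star_mul_pow_succ_sub_star_pow_succ {q : ℍ[ℝ]} (hq : q ≠ star q)
    (k : ℕ) :
    (q - star q)⁻¹ * (q ^ (k + 1) - star q ^ (k + 1)) =
      (((Chebyshev.U ℝ k).eval (q.re / ‖q‖) * ‖q‖ ^ k : ℝ) : ℍ[ℝ]) := by
  have hn : ‖q‖ ≠ 0 := norm_ne_zero_iff.2 fun h0 => hq (by simp [h0])
  have hsum : q + star q = algebraMap ℝ ℍ[ℝ] (2 * q.re) := self_add_star' q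
  have hprod : q * star q = algebraMap ℝ ℍ[ℝ] (‖q‖ ^ 2) := by
    rw [self_mul_star, normSq_eq_norm_mul_self, sq]
    rfl
  rw [star_comm_self.symm.pow_succ_sub_pow_succ_eq_mul_chebyshevU_of_mul_eq_sq hn hsum hprod,
    inv_mul_cancel_left₀ (sub_ne_zero.2 hq)]
  rfl

theorem stmt16_general (x y : ℍ[ℝ])
    (h : x * star y ≠ y * star x) (k : ℕ) :
    (x * star y - y * star x)⁻¹ * ((x * star y) ^ (k + 1) - (y * star x) ^ (k + 1)) =
      (((Polynomial.Chebyshev.U ℝ (k : ℤ)).eval ((x * star y).re / (‖x‖ * ‖y‖)) *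
          (‖x‖ * ‖y‖) ^ k : ℝ) : ℍ[ℝ]) ∧
    (x * star y - y * star x)⁻¹ * ((x * star y) ^ (k + 1) - (y * star x) ^ (k + 1)) =
      (((1 / ((k : ℝ) + 1)) * (((k : ℝ) + 1) *
          (Polynomial.Chebyshev.U ℝ (k : ℤ)).eval ((x * star y).re / (‖x‖ * ‖y‖)) *
            (‖x‖ * ‖y‖) ^ k) : ℝ) : ℍ[ℝ]) := by
  have hstar : y * star x = star (x * star y) := by rw [star_mul, star_star]
  have hnorm : ‖x‖ * ‖y‖ = ‖x * star y‖ := by rw [norm_mul, Quaternion.norm_star]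
  have hU := Quaternion.inv_sub_star_mul_pow_succ_sub_star_pow_succ (hstar ▸ h) k
  rw [hstar, hnorm]
  refine ⟨hU, hU.trans (congrArg _ ?_)⟩
  field_simp

/-- for nonzero quaternions `x, y` with `x·star y ≠ y·star x`,
`(x·star y - y·star x)⁻¹ ((x·star y)^{k+1} - (y·star x)^{k+1})` is the real scalar
`U_k(w)(‖x‖‖y‖)^k`, which equals `(1/(k+1)) Z^1_k(x,y)`. -/
theorem stmt16 (x y : ℍ[ℝ]) (hx : x ≠ 0) (hy : y ≠ 0)
    (h : x * star y ≠ y * star x) (k : ℕ) :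
    (x * star y - y * star x)⁻¹ * ((x * star y) ^ (k + 1) - (y * star x) ^ (k + 1)) =
      (((Polynomial.Chebyshev.U ℝ (k : ℤ)).eval ((x * star y).re / (‖x‖ * ‖y‖)) *
          (‖x‖ * ‖y‖) ^ k : ℝ) : ℍ[ℝ]) ∧
    (x * star y - y * star x)⁻¹ * ((x * star y) ^ (k + 1) - (y * star x) ^ (k + 1)) =
      (((1 / ((k : ℝ) + 1)) * (((k : ℝ) + 1) *
          (Polynomial.Chebyshev.U ℝ (k : ℤ)).eval ((x * star y).re / (‖x‖ * ‖y‖)) *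
            (‖x‖ * ‖y‖) ^ k) : ℝ) : ℍ[ℝ]) :=
  stmt16_general x y h k
end

section
/- Let x, y be real quaternions with x·(star y) ≠ y·(star x), and for j ∈ ℕ set S_j = (x·star y − y·star x)⁻¹ · ((x·star y)^j − (y·star x)^j). Then for every k ∈ ℕ, the real part of (x·star y)^k satisfies (as quaternions) Re((x·star y)^k) = S_{k+1} − ⟨x,y⟩·S_k, where ⟨x,y⟩ = Re(x·star y). -/
open scoped Quaternion

/-!
Write `a = x·star y`, so that `y·star x = star a`. For any two elements of a ring,
`(a - b)(aᵏ + bᵏ) + (a + b)(aᵏ - bᵏ) = 2(aᵏ⁺¹ - bᵏ⁺¹)`; with `b = star a` the sums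
`a + star a` and `aᵏ + star aᵏ` are twice the real parts of `a` and `aᵏ`, which are central.
Dividing by `2` and then by `a - star a` gives the identity.
-/

theorem sub_mul_pow_add_pow_add_add_mul_pow_sub_pow {R : Type*} [Ring R] (a b : R) (k : ℕ) :
    (a - b) * (a ^ k + b ^ k) + (a + b) * (a ^ k - b ^ k) = 2 * (a ^ (k + 1) - b ^ (k + 1)) := by
  rw [pow_succ', pow_succ']
  noncomm_ring

namespace Quaternion

variable {R : Type*} [CommRing R] [Invertible (2 : R)]

theorem pow_succ_sub_star_pow_succ (a : ℍ[R]) (k : ℕ) :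
    a ^ (k + 1) - star a ^ (k + 1) = (a - star a) * (a ^ k).re + a.re * (a ^ k - star a ^ k) := by
  have hk : a ^ k + star a ^ k = 2 * (a ^ k).re := by rw [← star_pow, self_add_star]
  have hsum := sub_mul_pow_add_pow_add_add_mul_pow_sub_pow a (star a) k
  rw [hk, self_add_star, ← mul_assoc, (Commute.ofNat_right _ 2).eq, mul_assoc, mul_assoc,
    ← mul_add, show (2 : ℍ[R]) = ((2 : R) : ℍ[R]) by norm_cast, coe_mul_eq_smul (2 : R),
    coe_mul_eq_smul (2 : R)] at hsum
  exact ((isUnit_of_invertible (2 : R)).smul_left_cancel.1 hsum).symm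

end Quaternion

/-- with `S_j = (x·star y - y·star x)⁻¹ ((x·star y)^j - (y·star x)^j)`,
one has `Re((x·star y)^k) = S_{k+1} - ⟨x,y⟩ S_k` as quaternions, where
`⟨x,y⟩ = Re(x·star y)`. -/
theorem stmt17 (x y : ℍ[ℝ]) (h : x * star y ≠ y * star x)
    (S : ℕ → ℍ[ℝ])
    (hS : ∀ j : ℕ, S j =
      (x * star y - y * star x)⁻¹ * ((x * star y) ^ j - (y * star x) ^ j))
    (k : ℕ) :
    ((((x * star y) ^ k).re : ℝ) : ℍ[ℝ]) =
      S (k + 1) - (((x * star y).re : ℝ) : ℍ[ℝ]) * S k := by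
  set a := x * star y
  have hstar : y * star x = star a := by simp [a, star_mul]
  rw [hstar] at h hS
  have hne : a - star a ≠ 0 := sub_ne_zero.mpr h
  calc ((a ^ k).re : ℍ[ℝ])
      = (a - star a)⁻¹ * ((a - star a) * (a ^ k).re) := (inv_mul_cancel_left₀ hne _).symm
    _ = (a - star a)⁻¹ * ((a ^ (k + 1) - star a ^ (k + 1)) - a.re * (a ^ k - star a ^ k)) := by
      rw [Quaternion.pow_succ_sub_star_pow_succ, add_sub_cancel_right]
    _ = S (k + 1) - a.re * S k := by
      rw [hS, hS, mul_sub, ← mul_assoc, ← mul_assoc, Quaternion.coe_commutes]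
end

section
/- Let x, y be nonzero real quaternions and k ∈ ℕ. Then (x·star y)^{k+1} = ( (x·star y)·U_k(w) − ‖x‖‖y‖·U_{k−1}(w) ) · (‖x‖‖y‖)^k, where U_j denotes the Chebyshev polynomial of the second kind, with the convention U_{−1} = 0, and the values U_j(w), ‖x‖, ‖y‖ are real scalars viewed as quaternions. -/
/-!
Every quaternion satisfies its Cayley–Hamilton relation `q² = 2 Re(q) q - ‖q‖²`. Writing
`Re(q) = w ‖q‖`, this is the three-term recurrence of the Chebyshev polynomials `U_n(w)`, so for
`q = x·star y`, with `‖q‖ = ‖x‖‖y‖`, induction gives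
`q^(n+1) = ‖q‖^n (U_n(w) q - ‖q‖ U_(n-1)(w))`.
-/

open scoped Quaternion

open Polynomial.Chebyshev in
theorem pow_succ_eq_chebyshev_U_smul_of_mul_self_eq {R A : Type*} [CommRing R] [Ring A]
    [Algebra R A] {q : A} {a w : R} (hq : q * q = (2 * w * a) • q - a ^ 2 • 1) (n : ℕ) :
    q ^ (n + 1) = (a ^ n * (U R n).eval w) • q - (a ^ (n + 1) * (U R (n - 1)).eval w) • 1 := by
  induction n with
  | zero => simp
  | succ n ih =>
    have hU : (U R (n + 1)).eval w = 2 * w * (U R n).eval w - (U R (n - 1)).eval w := by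
      simp [U_add_one]
    rw [pow_succ, ih, Nat.cast_add_one, add_sub_cancel_right, hU, sub_mul, smul_mul_assoc,
      smul_mul_assoc, hq, one_mul]
    match_scalars <;> ring

theorem Quaternion.mul_self_eq_two_re_smul_sub_normSq {R : Type*} [CommRing R] (q : ℍ[R]) :
    q * q = (2 * q.re) • q - normSq q • 1 := by
  have h := q.self_mul_star
  rw [Quaternion.star_eq_two_re_sub, mul_sub, Quaternion.mul_coe_eq_smul] at h
  rw [← Algebra.algebraMap_eq_smul_one, Quaternion.algebraMap_def, ← h, sub_sub_cancel]

theorem stmt18_general (x y : ℍ[ℝ]) (k : ℕ) :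
    (x * star y) ^ (k + 1) =
      ((x * star y) *
          (((Polynomial.Chebyshev.U ℝ (k : ℤ)).eval
            ((x * star y).re / (‖x‖ * ‖y‖)) : ℝ) : ℍ[ℝ]) -
        ((‖x‖ * ‖y‖ : ℝ) : ℍ[ℝ]) *
          (((Polynomial.Chebyshev.U ℝ ((k : ℤ) - 1)).eval
            ((x * star y).re / (‖x‖ * ‖y‖)) : ℝ) : ℍ[ℝ])) *
      ((((‖x‖ * ‖y‖) ^ k : ℝ)) : ℍ[ℝ]) := by
  rw [← norm_star y, ← norm_mul]
  generalize x * star y = q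
  have hre : q.re / ‖q‖ * ‖q‖ = q.re :=
    div_mul_cancel_of_imp fun h => by rw [norm_eq_zero.mp h, Quaternion.re_zero]
  have hq : q * q = (2 * (q.re / ‖q‖) * ‖q‖) • q - ‖q‖ ^ 2 • 1 := by
    rw [mul_assoc 2, hre, sq, ← Quaternion.normSq_eq_norm_mul_self]
    exact q.mul_self_eq_two_re_smul_sub_normSq
  rw [pow_succ_eq_chebyshev_U_smul_of_mul_self_eq hq k]
  simp only [← Quaternion.algebraMap_def, Algebra.algebraMap_eq_smul_one, mul_smul_comm, mul_one,
    smul_smul]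
  match_scalars <;> ring

/-- for nonzero quaternions `x, y`,
`(x·star y)^{k+1} = ((x·star y)·U_k(w) - ‖x‖‖y‖·U_{k-1}(w))·(‖x‖‖y‖)^k`,
with `w = Re(x·star y)/(‖x‖‖y‖)` and the convention `U_{-1} = 0`. -/
theorem stmt18 (x y : ℍ[ℝ]) (hx : x ≠ 0) (hy : y ≠ 0) (k : ℕ) :
    (x * star y) ^ (k + 1) =
      ((x * star y) *
          (((Polynomial.Chebyshev.U ℝ (k : ℤ)).eval
            ((x * star y).re / (‖x‖ * ‖y‖)) : ℝ) : ℍ[ℝ]) -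
        ((‖x‖ * ‖y‖ : ℝ) : ℍ[ℝ]) *
          (((Polynomial.Chebyshev.U ℝ ((k : ℤ) - 1)).eval
            ((x * star y).re / (‖x‖ * ‖y‖)) : ℝ) : ℍ[ℝ])) *
      ((((‖x‖ * ‖y‖) ^ k : ℝ)) : ℍ[ℝ]) :=
  stmt18_general x y k
end

section
/- Let k, r ∈ ℕ with 2r ≤ k. Then ∑_{ℓ=0}^{⌊k/2⌋−r} binom(k+1, 2(r+ℓ)+1) · binom(r+ℓ, ℓ) = 2^{k−2r} · binom(k−r, r). -/
/-!
Write `T n r = ∑ₘ C(n, 2m+1) C(m, r)` and `U n r = ∑ₘ C(n, 2m) C(m, r)`. Pascal's rule gives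
`T (n+1) r = T n r + U n r` and `U (n+1) (r+1) = T n r + T n (r+1) + U n (r+1)`, hence the
recurrence `T (n+2) (r+1) = 2 T (n+1) (r+1) + T n r`, which together with `T (n+2) 0 = 2 T (n+1) 0`
and `T (2r+1) r = 1` yields `T (2r+1+t) r = 2^t C(r+t, r)` by induction on `r` and `t`.
The left-hand side of the theorem is `T (k+1) r` with the vanishing terms `m < r` dropped.
-/

open Finset

theorem Finset.sum_range_eq_sum_range_of_forall_ge_eq_zero {M : Type*} [AddCommMonoid M]
    {f : ℕ → M} {N K : ℕ} (hN : ∀ m, N ≤ m → f m = 0) (hK : ∀ m, K ≤ m → f m = 0) :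
    ∑ m ∈ range N, f m = ∑ m ∈ range K, f m := by
  rcases le_total N K with h | h
  · exact sum_subset (range_subset_range.2 h) fun m _ hm ↦ hN m (by simpa using hm)
  · exact (sum_subset (range_subset_range.2 h) fun m _ hm ↦ hK m (by simpa using hm)).symm

namespace Nat

def oddChooseSum (n r : ℕ) : ℕ := ∑ m ∈ range (n + 1), choose n (2 * m + 1) * choose m r

def evenChooseSum (n r : ℕ) : ℕ := ∑ m ∈ range (n + 1), choose n (2 * m) * choose m r

theorem oddChooseSum_eq_sum_range {n N : ℕ} (r : ℕ) (h : n ≤ 2 * N) :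
    oddChooseSum n r = ∑ m ∈ range N, choose n (2 * m + 1) * choose m r := by
  refine sum_range_eq_sum_range_of_forall_ge_eq_zero ?_ ?_ <;>
  · intro m hm
    rw [choose_eq_zero_of_lt (by omega), zero_mul]

theorem evenChooseSum_eq_sum_range {n N : ℕ} (r : ℕ) (h : n < 2 * N) :
    evenChooseSum n r = ∑ m ∈ range N, choose n (2 * m) * choose m r := by
  refine sum_range_eq_sum_range_of_forall_ge_eq_zero ?_ ?_ <;>
  · intro m hm
    rw [choose_eq_zero_of_lt (by omega), zero_mul]

theorem oddChooseSum_succ (n r : ℕ) :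
    oddChooseSum (n + 1) r = oddChooseSum n r + evenChooseSum n r := by
  rw [oddChooseSum_eq_sum_range r (N := n + 1) (by omega), oddChooseSum, evenChooseSum,
    ← sum_add_distrib]
  exact sum_congr rfl fun m _ ↦ by rw [choose_succ_succ', add_mul, add_comm]

theorem evenChooseSum_succ (n r : ℕ) :
    evenChooseSum (n + 1) r =
      ∑ m ∈ range (n + 1), choose n (2 * m + 1) * choose (m + 1) r + evenChooseSum n r := by
  have pascal : ∀ m, choose (n + 1) (2 * (m + 1)) * choose (m + 1) r =
      choose n (2 * m + 1) * choose (m + 1) r + choose n (2 * (m + 1)) * choose (m + 1) r :=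
    fun m ↦ by rw [mul_add_one, choose_succ_succ', add_mul]
  rw [evenChooseSum, sum_range_succ', evenChooseSum_eq_sum_range r (N := n + 2) (by omega),
    sum_range_succ' (fun m ↦ choose n (2 * m) * choose m r) (n + 1),
    sum_congr rfl fun m _ ↦ pascal m, sum_add_distrib]
  simp only [mul_zero, choose_zero_right, one_mul, add_assoc]

theorem evenChooseSum_succ_zero (n : ℕ) :
    evenChooseSum (n + 1) 0 = oddChooseSum (n + 1) 0 := by
  rw [evenChooseSum_succ, oddChooseSum_succ n]
  simp only [oddChooseSum, choose_zero_right]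

theorem evenChooseSum_succ_succ (n r : ℕ) :
    evenChooseSum (n + 1) (r + 1) =
      oddChooseSum n r + oddChooseSum n (r + 1) + evenChooseSum n (r + 1) := by
  simp only [evenChooseSum_succ, oddChooseSum, ← sum_add_distrib, choose_succ_succ', mul_add]

theorem oddChooseSum_add_two_zero (n : ℕ) :
    oddChooseSum (n + 2) 0 = 2 * oddChooseSum (n + 1) 0 := by
  rw [oddChooseSum_succ (n + 1), evenChooseSum_succ_zero, two_mul]

theorem oddChooseSum_add_two_succ (n r : ℕ) :
    oddChooseSum (n + 2) (r + 1) = 2 * oddChooseSum (n + 1) (r + 1) + oddChooseSum n r := by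
  rw [oddChooseSum_succ (n + 1), evenChooseSum_succ_succ, oddChooseSum_succ n]
  ring

theorem oddChooseSum_eq_zero_of_le {n r : ℕ} (h : n ≤ 2 * r) : oddChooseSum n r = 0 := by
  refine sum_eq_zero fun m _ ↦ ?_
  rcases lt_or_ge m r with hm | hm
  · rw [choose_eq_zero_of_lt hm, mul_zero]
  · rw [choose_eq_zero_of_lt (by omega), zero_mul]

theorem evenChooseSum_two_mul_self (r : ℕ) : evenChooseSum (2 * r) r = 1 := by
  rw [evenChooseSum, sum_eq_single_of_mem r (mem_range.2 (by omega)), choose_self, choose_self]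
  intro m _ hmr
  rcases lt_or_gt_of_ne hmr with hm | hm
  · rw [choose_eq_zero_of_lt hm, mul_zero]
  · rw [choose_eq_zero_of_lt (by omega), zero_mul]

theorem oddChooseSum_succ_zero (t : ℕ) : oddChooseSum (t + 1) 0 = 2 ^ t := by
  induction t with
  | zero => rfl
  | succ t ih => rw [oddChooseSum_add_two_zero, ih, pow_succ']

theorem oddChooseSum_two_mul_add_one_add (r t : ℕ) :
    oddChooseSum (2 * r + 1 + t) r = 2 ^ t * choose (r + t) r := by
  induction r generalizing t with
  | zero =>
    rw [mul_zero, zero_add, zero_add, choose_zero_right, mul_one, add_comm]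
    exact oddChooseSum_succ_zero t
  | succ r ihr =>
    induction t with
    | zero =>
      rw [add_zero, oddChooseSum_succ, oddChooseSum_eq_zero_of_le le_rfl,
        evenChooseSum_two_mul_self, choose_self]
      rfl
    | succ t iht =>
      rw [show 2 * (r + 1) + 1 + (t + 1) = 2 * r + 1 + (t + 1) + 2 by ring,
        oddChooseSum_add_two_succ, show 2 * r + 1 + (t + 1) + 1 = 2 * (r + 1) + 1 + t by ring,
        iht, ihr, show r + 1 + (t + 1) = r + (t + 1) + 1 by ring, choose_succ_succ',
        show r + (t + 1) = r + 1 + t by ring]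
      ring

end Nat

/-- for `2r ≤ k`,
`∑_{ℓ=0}^{⌊k/2⌋-r} C(k+1, 2(r+ℓ)+1) C(r+ℓ, ℓ) = 2^{k-2r} C(k-r, r)`. -/
theorem stmt19 (k r : ℕ) (h : 2 * r ≤ k) :
    ∑ l ∈ Finset.range (k / 2 - r + 1),
      Nat.choose (k + 1) (2 * (r + l) + 1) * Nat.choose (r + l) l =
      2 ^ (k - 2 * r) * Nat.choose (k - r) r := by
  obtain ⟨t, rfl⟩ := Nat.exists_eq_add_of_le h
  have hsum := Nat.oddChooseSum_eq_sum_range r (n := 2 * r + 1 + t) (N := r + (t / 2 + 1))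
    (by omega)
  rw [Nat.oddChooseSum_two_mul_add_one_add, sum_range_add _ r,
    sum_eq_zero fun m hm ↦ by rw [Nat.choose_eq_zero_of_lt (mem_range.1 hm), mul_zero],
    zero_add, show 2 * r + 1 + t = 2 * r + t + 1 by ring] at hsum
  rw [show (2 * r + t) / 2 - r = t / 2 by omega, Nat.add_sub_cancel_left,
    show 2 * r + t - r = r + t by omega, hsum]
  exact sum_congr rfl fun l _ ↦ by rw [Nat.choose_symm_add]
end
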